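/- Let (X,f) be a topological dynamical system and A ⊆ X a closed set. Then the following are equivalent: (1) A is a basic set; (2) for every x ∈ X, |O(x) ∩ A| ≤ 1 and the closure of O(x) meets A; (3) for every x ∈ X, |O(x) ∩ A| ≤ 1 and ω(x) ∩ A ≠ ∅; (4) for every x ∈ X, |O(x) ∩ A| ≤ 1 and α(x) ∩ A ≠ ∅; (5) for every x ∈ X, |O(x) ∩ A| ≤ 1, and for every minimal set M, M ∩ A ≠ ∅. -/

import Mathlib

open Set

/-- The full orbit `{fⁿ(x) : n ∈ ℤ}` of a point under a homeomorphism. -/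
def orbitZ {X : Type*} [TopologicalSpace X] (f : X ≃ₜ X) (x : X) : Set X :=
  {y | ∃ n : ℤ, (f.toEquiv ^ n) x = y}

/-- `O(A) = ⋃_{n ∈ ℤ} fⁿ(A)`. -/
def orbitSetZ {X : Type*} [TopologicalSpace X] (f : X ≃ₜ X) (A : Set X) : Set X :=
  ⋃ n : ℤ, (f.toEquiv ^ n) '' A

/-- `O⁺(A) = ⋃_{n ≥ 0} fⁿ(A)`. -/
def orbitSetP {X : Type*} [TopologicalSpace X] (f : X ≃ₜ X) (A : Set X) : Set X :=
  ⋃ n : ℕ, (f.toEquiv ^ (n : ℤ)) '' A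

/-- `O⁻(A) = ⋃_{n ≤ 0} fⁿ(A)`. -/
def orbitSetN {X : Type*} [TopologicalSpace X] (f : X ≃ₜ X) (A : Set X) : Set X :=
  ⋃ n : ℕ, (f.toEquiv ^ (-(n : ℤ))) '' A

/-- The ω-limit set of a point. -/
def omegaSet {X : Type*} [TopologicalSpace X] (f : X ≃ₜ X) (x : X) : Set X :=
  ⋂ n : ℕ, closure {y | ∃ m : ℕ, n ≤ m ∧ (f.toEquiv ^ (m : ℤ)) x = y}

/-- The α-limit set of a point. -/
def alphaSet {X : Type*} [TopologicalSpace X] (f : X ≃ₜ X) (x : X) : Set X :=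
  ⋂ n : ℕ, closure {y | ∃ m : ℕ, n ≤ m ∧ (f.toEquiv ^ (-(m : ℤ))) x = y}

/-- A minimal set: nonempty, closed, invariant, and every orbit in it is dense in it. -/
def IsMinimalSet {X : Type*} [TopologicalSpace X] (f : X ≃ₜ X) (M : Set X) : Prop :=
  M.Nonempty ∧ IsClosed M ∧ f '' M = M ∧ ∀ x ∈ M, M ⊆ closure (orbitZ f x)

/-- `M_f`: the closure of the union of all minimal sets. -/
def minimalUnion {X : Type*} [TopologicalSpace X] (f : X ≃ₜ X) : Set X :=
  closure (⋃₀ {M | IsMinimalSet f M})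

/-- A wandering point. -/
def IsWandering {X : Type*} [TopologicalSpace X] (f : X ≃ₜ X) (x : X) : Prop :=
  ∃ U : Set X, IsOpen U ∧ x ∈ U ∧ ∀ n : ℤ, n ≠ 0 → (f.toEquiv ^ n) '' U ∩ U = ∅

/-- `Ω_f`: the set of non-wandering points. -/
def nonWandering {X : Type*} [TopologicalSpace X] (f : X ≃ₜ X) : Set X :=
  {x | ¬ IsWandering f x}

/-- A quasi-section: a closed set every open neighborhood of which has full orbit. -/
def IsQuasiSection {X : Type*} [TopologicalSpace X] (f : X ≃ₜ X) (A : Set X) : Prop :=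
  IsClosed A ∧ ∀ U : Set X, IsOpen U → A ⊆ U → orbitSetZ f U = Set.univ

/-- A minimal quasi-section (minimal w.r.t. inclusion among quasi-sections). -/
def IsMinimalQuasiSection {X : Type*} [TopologicalSpace X] (f : X ≃ₜ X) (A : Set X) : Prop :=
  IsQuasiSection f A ∧ ∀ B : Set X, IsQuasiSection f B → B ⊆ A → B = A

/-- A basic set: a quasi-section meeting every orbit in at most one point. -/
def IsBasicSet {X : Type*} [TopologicalSpace X] (f : X ≃ₜ X) (A : Set X) : Prop :=
  IsQuasiSection f A ∧ ∀ x : X, (orbitZ f x ∩ A).Subsingleton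

/-- A minimal basic set (minimal w.r.t. inclusion among basic sets). -/
def IsMinimalBasicSet {X : Type*} [TopologicalSpace X] (f : X ≃ₜ X) (A : Set X) : Prop :=
  IsBasicSet f A ∧ ∀ B : Set X, IsBasicSet f B → B ⊆ A → B = A

/-- Densely aperiodic: the points with infinite orbit are dense. -/
def DenselyAperiodic {X : Type*} [TopologicalSpace X] (f : X ≃ₜ X) : Prop :=
  Dense {x : X | (orbitZ f x).Infinite}


/-!
Because `A` is closed, every open `U ⊇ A` has full orbit exactly when every orbit closure
meets `A`; the other conditions are compared with this one. The limit sets `ω(x)` and `α(x)` are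
nonempty, closed, invariant subsets of the orbit closure of `x`, so each contains a whole orbit
closure; a minimal set contains the orbit closure of each of its points, and conversely every orbit
closure contains a minimal set by Zorn's lemma and compactness. The condition `|O(x) ∩ A| ≤ 1` is
common to all five statements.
-/

theorem closure_inter_nonempty_iff_forall_isOpen {X : Type*} [TopologicalSpace X] {s a : Set X} :
    (closure s ∩ a).Nonempty ↔ ∀ U, IsOpen U → a ⊆ U → (s ∩ U).Nonempty := by
  refine ⟨fun ⟨y, hys, hya⟩ U hU haU => mem_closure_iff.1 hys U hU (haU hya) |>.mono
    (fun _ h => ⟨h.2, h.1⟩), fun h => ?_⟩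
  by_contra hempty
  obtain ⟨z, hzs, hz⟩ := h _ isClosed_closure.isOpen_compl
    (fun y hya hys => hempty ⟨y, hys, hya⟩)
  exact hz (subset_closure hzs)

section Orbits

variable {X : Type*} [TopologicalSpace X] (f : X ≃ₜ X)

open Pointwise in
theorem zpow_image_eq_of_image_eq {K : Set X} (hK : f '' K = K) (n : ℤ) :
    ⇑(f.toEquiv ^ n) '' K = K := by
  have hfix : K ∈ MulAction.fixedBy (Set X) f.toEquiv := by
    rwa [MulAction.mem_fixedBy, ← Set.image_smul]
  simpa only [MulAction.mem_fixedBy, ← Set.image_smul, Equiv.Perm.smul_def] using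
    MulAction.mem_fixedBy_zpow hfix n

theorem orbitZ_subset_of_image_eq {K : Set X} (hK : f '' K = K) {x : X} (hx : x ∈ K) :
    orbitZ f x ⊆ K := by
  rintro _ ⟨n, rfl⟩
  rw [← zpow_image_eq_of_image_eq f hK n]
  exact mem_image_of_mem _ hx

theorem closure_orbitZ_subset_of_image_eq {K : Set X} (hKc : IsClosed K) (hK : f '' K = K)
    {x : X} (hx : x ∈ K) : closure (orbitZ f x) ⊆ K :=
  closure_minimal (orbitZ_subset_of_image_eq f hK hx) hKc

theorem mem_orbitZ_self (x : X) : x ∈ orbitZ f x := ⟨0, rfl⟩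

theorem image_orbitZ (x : X) : f '' orbitZ f x = orbitZ f x := by
  change f '' range (fun n : ℤ => (f.toEquiv ^ n) x) = range _
  have hshift :
      (f ∘ fun n : ℤ => (f.toEquiv ^ n) x) = (fun n => (f.toEquiv ^ n) x) ∘ ((1 : ℤ) + ·) := by
    ext n; simp [zpow_one_add, Equiv.Perm.mul_apply]
  rw [← range_comp, hshift, (add_left_surjective 1).range_comp]

theorem image_closure_orbitZ (x : X) : f '' closure (orbitZ f x) = closure (orbitZ f x) := by
  rw [f.image_closure, image_orbitZ]

theorem mem_orbitSetZ_iff {U : Set X} {x : X} : x ∈ orbitSetZ f U ↔ (orbitZ f x ∩ U).Nonempty := by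
  simp only [orbitSetZ, orbitZ, mem_iUnion, mem_image, Set.Nonempty, mem_inter_iff, mem_ofPred_eq]
  constructor
  · rintro ⟨n, u, hu, rfl⟩
    exact ⟨u, ⟨-n, by simp [zpow_neg]⟩, hu⟩
  · rintro ⟨_, ⟨n, rfl⟩, hu⟩
    exact ⟨-n, _, hu, by simp [zpow_neg]⟩

theorem orbitZ_symm (x : X) : orbitZ f.symm x = orbitZ f x := by
  have hpow (n : ℤ) : f.symm.toEquiv ^ n = f.toEquiv ^ (-n) := by
    rw [zpow_neg, ← inv_zpow]; rfl
  ext y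
  exact ⟨fun ⟨n, hn⟩ => ⟨-n, by rwa [← hpow]⟩, fun ⟨n, hn⟩ => ⟨-n, by rwa [hpow, neg_neg]⟩⟩

end Orbits

section LimitSets

variable {X : Type*} [TopologicalSpace X] (f : X ≃ₜ X)

theorem omegaSet_eq_iInter_closure_image_Ici (x : X) :
    omegaSet f x = ⋂ n : ℕ, closure ((fun m : ℕ => (f.toEquiv ^ (m : ℤ)) x) '' Ici n) :=
  rfl

theorem antitone_closure_image_Ici (x : X) :
    Antitone fun n : ℕ => closure ((fun m : ℕ => (f.toEquiv ^ (m : ℤ)) x) '' Ici n) :=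
  fun _ _ h => closure_mono (image_mono (Ici_subset_Ici.2 h))

theorem isClosed_omegaSet (x : X) : IsClosed (omegaSet f x) :=
  isClosed_iInter fun _ => isClosed_closure

theorem omegaSet_nonempty [CompactSpace X] (x : X) : (omegaSet f x).Nonempty :=
  IsCompact.nonempty_iInter_of_sequence_nonempty_isCompact_isClosed _
    (fun n => antitone_closure_image_Ici f x n.le_succ)
    (fun _ => (nonempty_Ici.image _).closure) isClosed_closure.isCompact
    (fun _ => isClosed_closure)

theorem image_omegaSet (x : X) : f '' omegaSet f x = omegaSet f x := by
  set g := fun m : ℕ => (f.toEquiv ^ (m : ℤ)) x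
  have hshift : (f ∘ g) = g ∘ (· + 1) := by
    ext m; simp [g, pow_succ', Equiv.Perm.mul_apply]
  have htail (n : ℕ) : f '' closure (g '' Ici n) = closure (g '' Ici (n + 1)) := by
    rw [f.image_closure, ← image_comp, hshift, image_comp, image_add_const_Ici]
  rw [omegaSet_eq_iInter_closure_image_Ici, image_iInter f.bijective, iInter_congr htail,
    (antitone_closure_image_Ici f x).iInter_nat_add]

theorem omegaSet_subset_closure_orbitZ (x : X) : omegaSet f x ⊆ closure (orbitZ f x) :=
  (iInter_subset _ 0).trans (closure_mono (by rintro _ ⟨m, -, rfl⟩; exact ⟨m, rfl⟩))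

theorem alphaSet_eq_omegaSet_symm (x : X) : alphaSet f x = omegaSet f.symm x := by
  have hpow (m : ℕ) : f.symm.toEquiv ^ (m : ℤ) = f.toEquiv ^ (-(m : ℤ)) := by
    rw [zpow_neg, ← inv_zpow]; rfl
  simp only [alphaSet, omegaSet, hpow]

end LimitSets

section MinimalSets

variable {X : Type*} [TopologicalSpace X] (f : X ≃ₜ X)

theorem exists_isMinimalSet_subset [CompactSpace X] {K : Set X} (hKc : IsClosed K)
    (hKne : K.Nonempty) (hK : f '' K = K) : ∃ M ⊆ K, IsMinimalSet f M := by
  let S : Set (Set X) := {N | N.Nonempty ∧ IsClosed N ∧ f '' N = N}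
  have hchain : ∀ c ⊆ S, IsChain (· ⊆ ·) c → c.Nonempty → ∃ lb ∈ S, ∀ s ∈ c, lb ⊆ s := by
    intro c hcS hc hcne
    have : Nonempty c := hcne.to_subtype
    refine ⟨⋂₀ c, ⟨?_, isClosed_sInter fun N hN => (hcS hN).2.1, ?_⟩,
      fun _ => sInter_subset_of_mem⟩
    · have hdir : DirectedOn (· ⊇ ·) c := fun N hN N' hN' =>
        (hc.total hN hN').elim (fun h => ⟨N, hN, subset_rfl, h⟩) (fun h => ⟨N', hN', h, subset_rfl⟩)
      exact IsCompact.nonempty_sInter_of_directed_nonempty_isCompact_isClosed hdir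
        (fun N hN => (hcS hN).1) (fun N hN => (hcS hN).2.1.isCompact) (fun N hN => (hcS hN).2.1)
    · rw [sInter_eq_iInter, image_iInter f.bijective]
      exact iInter_congr fun N => (hcS N.2).2.2
  obtain ⟨M, hMK, hM⟩ := zorn_superset_nonempty S hchain K ⟨hKne, hKc, hK⟩
  obtain ⟨hMne, hMc, hMinv⟩ := hM.prop
  refine ⟨M, hMK, hMne, hMc, hMinv, fun x hx => hM.2 ?_ ?_⟩
  · exact ⟨⟨x, subset_closure (mem_orbitZ_self f x)⟩, isClosed_closure, image_closure_orbitZ f x⟩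
  · exact closure_orbitZ_subset_of_image_eq f hMc hMinv hx

end MinimalSets

section QuasiSections

variable {X : Type*} [TopologicalSpace X] (f : X ≃ₜ X) {A : Set X}

theorem isQuasiSection_iff (hA : IsClosed A) :
    IsQuasiSection f A ↔ ∀ x, (closure (orbitZ f x) ∩ A).Nonempty := by
  simp only [IsQuasiSection, hA, true_and, eq_univ_iff_forall, mem_orbitSetZ_iff,
    closure_inter_nonempty_iff_forall_isOpen]
  exact ⟨fun h x U hU hAU => h U hU hAU x, fun h U hU hAU x => h x U hU hAU⟩

variable [CompactSpace X]

theorem forall_omegaSet_inter_nonempty_iff :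
    (∀ x, (omegaSet f x ∩ A).Nonempty) ↔ ∀ x, (closure (orbitZ f x) ∩ A).Nonempty := by
  refine ⟨fun h x => (h x).mono (inter_subset_inter_left A (omegaSet_subset_closure_orbitZ f x)),
    fun h x => ?_⟩
  obtain ⟨y, hy⟩ := omegaSet_nonempty f x
  have hyx : closure (orbitZ f y) ⊆ omegaSet f x :=
    closure_orbitZ_subset_of_image_eq f (isClosed_omegaSet f x) (image_omegaSet f x) hy
  exact (h y).mono (inter_subset_inter_left A hyx)

theorem forall_alphaSet_inter_nonempty_iff :
    (∀ x, (alphaSet f x ∩ A).Nonempty) ↔ ∀ x, (closure (orbitZ f x) ∩ A).Nonempty := by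
  simpa only [alphaSet_eq_omegaSet_symm, orbitZ_symm] using
    forall_omegaSet_inter_nonempty_iff f.symm (A := A)

theorem forall_isMinimalSet_inter_nonempty_iff :
    (∀ M, IsMinimalSet f M → (M ∩ A).Nonempty) ↔ ∀ x, (closure (orbitZ f x) ∩ A).Nonempty := by
  refine ⟨fun h x => ?_, fun h M ⟨⟨x, hx⟩, hMc, hM, _⟩ => ?_⟩
  · obtain ⟨M, hMx, hM⟩ := exists_isMinimalSet_subset f isClosed_closure
      ⟨x, subset_closure (mem_orbitZ_self f x)⟩ (image_closure_orbitZ f x)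
    exact (h M hM).mono (inter_subset_inter_left A hMx)
  · exact (h x).mono (inter_subset_inter_left A (closure_orbitZ_subset_of_image_eq f hMc hM hx))

end QuasiSections

theorem stmt7_general {X : Type*} [TopologicalSpace X] [CompactSpace X] (f : X ≃ₜ X)
    (A : Set X) (hA : IsClosed A) :
    List.TFAE [IsBasicSet f A,
      ∀ x : X, (orbitZ f x ∩ A).Subsingleton ∧ (closure (orbitZ f x) ∩ A).Nonempty,
      ∀ x : X, (orbitZ f x ∩ A).Subsingleton ∧ (omegaSet f x ∩ A).Nonempty,
      ∀ x : X, (orbitZ f x ∩ A).Subsingleton ∧ (alphaSet f x ∩ A).Nonempty,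
      (∀ x : X, (orbitZ f x ∩ A).Subsingleton) ∧
        ∀ M : Set X, IsMinimalSet f M → (M ∩ A).Nonempty] := by
  simp only [forall_and]
  tfae_have 1 ↔ 2 := by rw [IsBasicSet, isQuasiSection_iff f hA, and_comm]
  tfae_have 2 ↔ 3 := and_congr_right' (forall_omegaSet_inter_nonempty_iff f).symm
  tfae_have 2 ↔ 4 := and_congr_right' (forall_alphaSet_inter_nonempty_iff f).symm
  tfae_have 2 ↔ 5 := and_congr_right' (forall_isMinimalSet_inter_nonempty_iff f).symm
  tfae_finish

theorem stmt7 {X : Type*} [TopologicalSpace X] [CompactSpace X] [T2Space X] [Nonempty X] (f : X ≃ₜ X)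
    (A : Set X) (hA : IsClosed A) :
    List.TFAE [IsBasicSet f A,
      ∀ x : X, (orbitZ f x ∩ A).Subsingleton ∧ (closure (orbitZ f x) ∩ A).Nonempty,
      ∀ x : X, (orbitZ f x ∩ A).Subsingleton ∧ (omegaSet f x ∩ A).Nonempty,
      ∀ x : X, (orbitZ f x ∩ A).Subsingleton ∧ (alphaSet f x ∩ A).Nonempty,
      (∀ x : X, (orbitZ f x ∩ A).Subsingleton) ∧
        ∀ M : Set X, IsMinimalSet f M → (M ∩ A).Nonempty] :=
  stmt7_general f A hA
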